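/- There exist constants c₁, c₂ > 0 such that for all 0 < s ≤ 1, c₁/(s·(log(2+1/s))³) ≤ ∫_s² (log(1+1/u))^{-3} / u² du ≤ c₂/(s·(log(2+1/s))³). -/

import Mathlib

/-!
Write `L u = log (1 + 1/u)`, a decreasing function with `L u ≥ 1/(u+1)`.

Lower bound: on `[s, 2s]` the integrand is at least `1/(4 s² L(s)³)`.

Upper bound: `-(u (L u + 3)³)⁻¹` has derivative `(L + 3 - 3/(u+1)) / (u² (L+3)⁴) ≥ L / (u² (L+3)⁴)`;
the shift by `3` keeps this positive even where `L` is small, unlike for `-(u L³)⁻¹`. On `(0, b]`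
we have `L ≥ 1/(b+1)`, hence `L + 3 ≤ (3b+4) L`, so `(3b+4)⁴` times this derivative dominates the
integrand, and the integral over `[s, b]` is at most `(3b+4)⁴ / (s (L(s)+3)³)`.

Finally `log (1 + 1/s) ≤ log (2 + 1/s) ≤ log (1 + 1/s) + 1`.
-/

open MeasureTheory Real Set

lemma inv_add_one_le_log_one_add_inv {u : ℝ} (hu : 0 < u) : (u + 1)⁻¹ ≤ log (1 + 1 / u) := by
  have h := one_sub_inv_le_log_of_pos (x := 1 + 1 / u) (by positivity)
  have : 1 - (1 + 1 / u)⁻¹ = (u + 1)⁻¹ := by field_simp; ring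
  linarith

lemma log_one_add_inv_pos {u : ℝ} (hu : 0 < u) : 0 < log (1 + 1 / u) :=
  (inv_pos.2 (by linarith)).trans_le (inv_add_one_le_log_one_add_inv hu)

lemma hasDerivAt_log_one_add_inv {u : ℝ} (hu : 0 < u) :
    HasDerivAt (fun u => log (1 + 1 / u)) (-(u * (u + 1))⁻¹) u := by
  have h := ((hasDerivAt_inv hu.ne').const_add 1).log (by positivity : 1 + u⁻¹ ≠ 0)
  convert h using 1
  · ext; simp [one_div]
  · field_simp

lemma continuousOn_inv_log_one_add_inv_cube_mul_sq :
    ContinuousOn (fun u => 1 / (log (1 + 1 / u) ^ 3 * u ^ 2)) (Ioi 0) := fun u hu =>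
  have hu : 0 < u := hu
  (continuousAt_const.div
    (((hasDerivAt_log_one_add_inv hu).continuousAt.pow 3).mul (continuousAt_id.pow 2))
    (mul_pos (pow_pos (log_one_add_inv_pos hu) 3) (pow_pos hu 2)).ne').continuousWithinAt

lemma hasDerivAt_inv_mul_log_one_add_inv_add_three_cube {u : ℝ} (hu : 0 < u) :
    HasDerivAt (fun u => (u * (log (1 + 1 / u) + 3) ^ 3)⁻¹)
      (-(log (1 + 1 / u) + 3 - 3 / (u + 1)) / (u ^ 2 * (log (1 + 1 / u) + 3) ^ 4)) u := by
  have hM : 0 < log (1 + 1 / u) + 3 := by linarith [log_one_add_inv_pos hu]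
  have h := ((hasDerivAt_id' u).fun_mul
    (((hasDerivAt_log_one_add_inv hu).add_const 3).fun_pow 3)).fun_inv
    (mul_pos hu (pow_pos hM 3)).ne'
  refine h.congr_deriv ?_
  generalize log (1 + 1 / u) + 3 = M at hM ⊢
  field_simp
  ring

lemma inv_log_one_add_inv_cube_mul_sq_le {u b : ℝ} (hu : 0 < u) (hub : u ≤ b) :
    1 / (log (1 + 1 / u) ^ 3 * u ^ 2) ≤
      (3 * b + 4) ^ 4 * ((log (1 + 1 / u) + 3 - 3 / (u + 1)) /
        (u ^ 2 * (log (1 + 1 / u) + 3) ^ 4)) := by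
  set L := log (1 + 1 / u)
  have hL : 0 < L := log_one_add_inv_pos hu
  have hb : 0 < 3 * b + 4 := by linarith
  have hLb : (b + 1)⁻¹ ≤ L := le_trans (by gcongr) (inv_add_one_le_log_one_add_inv hu)
  have hML : L + 3 ≤ (3 * b + 4) * L := by
    rw [inv_le_iff_one_le_mul₀ (by linarith)] at hLb; linarith
  have hdrop : L ≤ L + 3 - 3 / (u + 1) := by
    have : 3 / (u + 1) ≤ 3 := div_le_self (by norm_num) (by linarith)
    linarith
  have hL' : 0 ≤ L + 3 - 3 / (u + 1) := hL.le.trans hdrop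
  calc 1 / (L ^ 3 * u ^ 2) = L / (u ^ 2 * L ^ 4) := by field_simp
    _ = (3 * b + 4) ^ 4 * (L / (u ^ 2 * ((3 * b + 4) * L) ^ 4)) := by field_simp
    _ ≤ (3 * b + 4) ^ 4 * ((L + 3 - 3 / (u + 1)) / (u ^ 2 * (L + 3) ^ 4)) := by gcongr

lemma intervalIntegrable_inv_log_one_add_inv_cube_mul_sq {a b : ℝ} (ha : 0 < a) (hb : 0 < b) :
    IntervalIntegrable (fun u => 1 / (log (1 + 1 / u) ^ 3 * u ^ 2)) volume a b :=
  (continuousOn_inv_log_one_add_inv_cube_mul_sq.mono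
    fun _ hu => lt_of_lt_of_le (lt_min ha hb) hu.1).intervalIntegrable

lemma integral_inv_log_one_add_inv_cube_mul_sq_le {s b : ℝ} (hs : 0 < s) (hsb : s ≤ b) :
    ∫ u in s..b, 1 / (log (1 + 1 / u) ^ 3 * u ^ 2) ≤
      (3 * b + 4) ^ 4 / (s * (log (1 + 1 / s) + 3) ^ 3) := by
  set g := fun u => -((3 * b + 4) ^ 4 * (u * (log (1 + 1 / u) + 3) ^ 3)⁻¹)
  have hg : ∀ u ∈ Icc s b, HasDerivAt g ((3 * b + 4) ^ 4 *
      ((log (1 + 1 / u) + 3 - 3 / (u + 1)) / (u ^ 2 * (log (1 + 1 / u) + 3) ^ 4))) u := by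
    intro u hu
    refine (((hasDerivAt_inv_mul_log_one_add_inv_add_three_cube
      (hs.trans_le hu.1)).const_mul ((3 * b + 4) ^ 4)).fun_neg).congr_deriv ?_
    ring
  have hgb : g b ≤ 0 := by
    have := log_one_add_inv_pos (hs.trans_le hsb)
    have : 0 < b := hs.trans_le hsb
    simp only [g, neg_nonpos]
    positivity
  calc ∫ u in s..b, 1 / (log (1 + 1 / u) ^ 3 * u ^ 2) ≤ g b - g s :=
        intervalIntegral.integral_le_sub_of_hasDeriv_right_of_le hsb
          (fun u hu => (hg u hu).continuousAt.continuousWithinAt)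
          (fun u hu => (hg u (Ioo_subset_Icc_self hu)).hasDerivWithinAt)
          (continuousOn_inv_log_one_add_inv_cube_mul_sq.mono
            fun _ hu => hs.trans_le hu.1).integrableOn_Icc
          (fun u hu => inv_log_one_add_inv_cube_mul_sq_le (hs.trans hu.1) hu.2.le)
    _ ≤ -g s := by linarith
    _ = (3 * b + 4) ^ 4 / (s * (log (1 + 1 / s) + 3) ^ 3) := by simp [g, div_eq_mul_inv]

lemma le_integral_inv_log_one_add_inv_cube_mul_sq {s b : ℝ} (hs : 0 < s) (hsb : 2 * s ≤ b) :
    1 / (4 * s * log (1 + 1 / s) ^ 3) ≤ ∫ u in s..b, 1 / (log (1 + 1 / u) ^ 3 * u ^ 2) := by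
  have hLs := log_one_add_inv_pos hs
  have htail : 0 ≤ ∫ u in 2 * s..b, 1 / (log (1 + 1 / u) ^ 3 * u ^ 2) := by
    refine intervalIntegral.integral_nonneg hsb fun u hu => ?_
    have hu : 0 < u := by linarith [hu.1]
    have := log_one_add_inv_pos hu
    positivity
  have hbelow : ∀ u ∈ Icc s (2 * s),
      1 / (4 * s ^ 2 * log (1 + 1 / s) ^ 3) ≤ 1 / (log (1 + 1 / u) ^ 3 * u ^ 2) := by
    rintro u ⟨hsu, hu2s⟩
    have hu : 0 < u := hs.trans_le hsu
    have := log_one_add_inv_pos hu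
    have : u ^ 2 ≤ 4 * s ^ 2 := by nlinarith
    rw [mul_comm (4 * s ^ 2)]
    gcongr
  calc 1 / (4 * s * log (1 + 1 / s) ^ 3)
      = ∫ _ in s..2 * s, 1 / (4 * s ^ 2 * log (1 + 1 / s) ^ 3) := by
        rw [intervalIntegral.integral_const, smul_eq_mul, two_mul, add_sub_cancel_right]
        field_simp
    _ ≤ ∫ u in s..2 * s, 1 / (log (1 + 1 / u) ^ 3 * u ^ 2) :=
        intervalIntegral.integral_mono_on (by linarith) intervalIntegrable_const
          (intervalIntegrable_inv_log_one_add_inv_cube_mul_sq hs (by linarith)) hbelow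
    _ ≤ _ := le_add_of_nonneg_right htail
    _ = ∫ u in s..b, 1 / (log (1 + 1 / u) ^ 3 * u ^ 2) :=
        intervalIntegral.integral_add_adjacent_intervals
          (intervalIntegrable_inv_log_one_add_inv_cube_mul_sq hs (by linarith))
          (intervalIntegrable_inv_log_one_add_inv_cube_mul_sq (by linarith) (by linarith))

lemma log_two_add_inv_le_log_one_add_inv_add_one {s : ℝ} (hs : 0 < s) :
    log (2 + 1 / s) ≤ log (1 + 1 / s) + 1 := by
  calc log (2 + 1 / s) ≤ log (2 * (1 + 1 / s)) := by gcongr; linarith [one_div_pos.2 hs]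
    _ = log 2 + log (1 + 1 / s) := log_mul two_ne_zero (by positivity)
    _ ≤ log (1 + 1 / s) + 1 := by linarith [log_two_lt_d9]

/-- `∫_s² (log(1+1/u))^{-3}/u² du ≈ 1/(s (log(2+1/s))³)` for `0 < s ≤ 1`. -/
theorem integral_V6_comp :
    ∃ c₁ > (0:ℝ), ∃ c₂ > (0:ℝ), ∀ s : ℝ, 0 < s → s ≤ 1 →
      c₁ / (s * (Real.log (2 + 1/s))^3) ≤
        (∫ u in s..2, 1 / ((Real.log (1 + 1/u))^3 * u^2)) ∧
      (∫ u in s..2, 1 / ((Real.log (1 + 1/u))^3 * u^2)) ≤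
        c₂ / (s * (Real.log (2 + 1/s))^3) := by
  refine ⟨1 / 4, by norm_num, 10 ^ 4, by norm_num, fun s hs hs1 => ⟨?_, ?_⟩⟩
  · have := log_one_add_inv_pos hs
    calc 1 / 4 / (s * log (2 + 1 / s) ^ 3) ≤ 1 / (4 * s * log (1 + 1 / s) ^ 3) := by
          rw [div_div, ← mul_assoc]
          gcongr
          norm_num
      _ ≤ _ := le_integral_inv_log_one_add_inv_cube_mul_sq hs (by linarith)
  · have : 0 < log (2 + 1 / s) := log_pos (by linarith [one_div_pos.2 hs])
    calc _ ≤ (3 * 2 + 4) ^ 4 / (s * (log (1 + 1 / s) + 3) ^ 3) :=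
          integral_inv_log_one_add_inv_cube_mul_sq_le hs (by linarith)
      _ = 10 ^ 4 / (s * (log (1 + 1 / s) + 3) ^ 3) := by norm_num
      _ ≤ 10 ^ 4 / (s * log (2 + 1 / s) ^ 3) := by
          gcongr
          linarith [log_two_add_inv_le_log_one_add_inv_add_one hs]
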